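/- arXiv:1211.5661 — 2 statements merged into one kernel-verified Lean document; each statement's English description precedes it below -/
import Mathlib

section
/- With Φ and H as above, define Ω = nΦH' − 2(n−2)HΦ' (derivatives in u). Then Ω = n²Φ²Φ''' − 3n(n−2)ΦΦ'Φ'' + 2(n−1)(n−2)(Φ')³, and X(Ω) = 3(na₁ − nu + 2u)Ω. Consequently 3·X(H)·Ω = 2·H·X(Ω), so that Ω²/H³ is a first integral of X (X(Ω²/H³) = 0 in the fraction field, wherever H ≠ 0). -/
open Polynomial

/-- The derivation `X = ∂/∂z + (q − u²)∂/∂u` on `K[u]`. -/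
noncomputable def riccatiDer {K : Type*} [Field K] (δ : K → K) (q : K)
    (f : Polynomial K) : Polynomial K :=
  f.sum (fun k c => C (δ c) * X ^ k) + (C q - X ^ 2) * derivative f

section RiccatiAux

variable {K : Type*} [Field K] (δ : K → K)
variable (hadd : ∀ a b : K, δ (a + b) = δ a + δ b)
variable (hmul : ∀ a b : K, δ (a * b) = a * δ b + δ a * b)

/-- Coefficientwise application of `δ`. -/
noncomputable def rdDmap (f : Polynomial K) : Polynomial K :=
  f.sum fun k c => C (δ c) * X ^ k

lemma rd_def (q : K) (f : Polynomial K) :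
    riccatiDer δ q f = rdDmap δ f + (C q - X ^ 2) * derivative f := rfl

include hadd

lemma rd_dzero : δ 0 = 0 := by
  simpa using map_zero (AddMonoidHom.mk' δ hadd)

lemma rd_dsub (a b : K) : δ (a - b) = δ a - δ b := by
  simpa using (AddMonoidHom.mk' δ hadd).map_sub a b

lemma rd_dnsmul (m : ℕ) (a : K) : δ ((m : K) * a) = (m : K) * δ a := by
  have := (AddMonoidHom.mk' δ hadd).map_nsmul m a
  simpa [nsmul_eq_mul] using this

lemma coeff_rdDmap (f : Polynomial K) (k : ℕ) :
    (rdDmap δ f).coeff k = δ (f.coeff k) := by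
  rw [rdDmap, coeff_sum, Polynomial.sum_def]
  simp only [C_mul_X_pow_eq_monomial, coeff_monomial]
  rw [Finset.sum_ite_eq' f.support k fun i => δ (f.coeff i)]
  split
  · rfl
  · rename_i h
    rw [Polynomial.notMem_support_iff.mp h, rd_dzero δ hadd]

lemma rdDmap_sub (f g : Polynomial K) : rdDmap δ (f - g) = rdDmap δ f - rdDmap δ g := by
  ext k; simp [coeff_rdDmap δ hadd, rd_dsub δ hadd]

lemma derivative_rdDmap (f : Polynomial K) :
    derivative (rdDmap δ f) = rdDmap δ (derivative f) := by
  ext k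
  rw [coeff_derivative, coeff_rdDmap δ hadd, coeff_rdDmap δ hadd, coeff_derivative]
  have h : f.coeff (k + 1) * ((k : K) + 1) = ((k + 1 : ℕ) : K) * f.coeff (k + 1) := by
    push_cast; ring
  rw [h, rd_dnsmul δ hadd]
  push_cast; ring

lemma rdDmap_C (a : K) : rdDmap δ (C a) = C (δ a) := by
  ext k
  rw [coeff_rdDmap δ hadd, coeff_C, coeff_C]
  split
  · rfl
  · rw [rd_dzero δ hadd]

lemma rd_C (q a : K) : riccatiDer δ q (C a) = C (δ a) := by
  rw [rd_def, rdDmap_C δ hadd, derivative_C, mul_zero, add_zero]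

lemma rd_sub (q : K) (f g : Polynomial K) :
    riccatiDer δ q (f - g) = riccatiDer δ q f - riccatiDer δ q g := by
  rw [rd_def, rd_def, rd_def, rdDmap_sub δ hadd, derivative_sub]
  ring

lemma rd_deriv (q : K) (f : Polynomial K) :
    riccatiDer δ q (derivative f)
      = derivative (riccatiDer δ q f) + 2 * X * derivative f := by
  rw [rd_def, rd_def, derivative_add, derivative_mul, derivative_rdDmap δ hadd]
  simp only [derivative_sub, derivative_C, derivative_X_pow, Nat.cast_ofNat,
    map_ofNat, pow_one]
  ring

include hmul

lemma rdDmap_mul (f g : Polynomial K) :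
    rdDmap δ (f * g) = f * rdDmap δ g + rdDmap δ f * g := by
  ext k
  have hs : δ (∑ x ∈ Finset.HasAntidiagonal.antidiagonal k, f.coeff x.1 * g.coeff x.2)
      = ∑ x ∈ Finset.HasAntidiagonal.antidiagonal k, δ (f.coeff x.1 * g.coeff x.2) := by
    exact map_sum (AddMonoidHom.mk' δ hadd)
      (fun x : ℕ × ℕ => f.coeff x.1 * g.coeff x.2) (Finset.HasAntidiagonal.antidiagonal k)
  rw [coeff_add, coeff_rdDmap δ hadd, coeff_mul, coeff_mul, coeff_mul, hs,
    ← Finset.sum_add_distrib]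
  refine Finset.sum_congr rfl fun x _ => ?_
  simp [coeff_rdDmap δ hadd, hmul]

lemma rd_mul (q : K) (f g : Polynomial K) :
    riccatiDer δ q (f * g)
      = f * riccatiDer δ q g + riccatiDer δ q f * g := by
  rw [rd_def, rd_def, rd_def, rdDmap_mul δ hadd hmul, derivative_mul]
  ring

end RiccatiAux

/-- With `Φ` monic of degree `n` satisfying `X(Φ) = n(a₁−u)Φ` and
`H = nΦΦ'' − (n−1)(Φ')²`, the polynomial `Ω = nΦH' − 2(n−2)HΦ'` equals
`n²Φ²Φ''' − 3n(n−2)ΦΦ'Φ'' + 2(n−1)(n−2)(Φ')³`, satisfies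
`X(Ω) = 3(na₁ − nu + 2u)Ω`, and `3·X(H)·Ω = 2·H·X(Ω)` (so `Ω²/H³` is a first
integral of `X`). -/
theorem omega_is_darboux
    {K : Type*} [Field K] [CharZero K]
    (δ : K → K)
    (hadd : ∀ a b : K, δ (a + b) = δ a + δ b)
    (hmul : ∀ a b : K, δ (a * b) = a * δ b + δ a * b)
    (q : K) (n : ℕ) (a1 : K)
    (Φ : Polynomial K) (hmonic : Φ.Monic) (hdeg : Φ.natDegree = n)
    (hdar : riccatiDer δ q Φ = (C ((n : K) * a1) - C (n : K) * X) * Φ)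
    (H : Polynomial K)
    (hH : H = C (n : K) * Φ * derivative (derivative Φ)
      - C ((n : K) - 1) * (derivative Φ) ^ 2)
    (Ω : Polynomial K)
    (hΩ : Ω = C (n : K) * Φ * derivative H - C (2 * ((n : K) - 2)) * H * derivative Φ) :
    Ω = C ((n : K) ^ 2) * Φ ^ 2 * derivative (derivative (derivative Φ))
        - C (3 * (n : K) * ((n : K) - 2)) * Φ * derivative Φ * derivative (derivative Φ)
        + C (2 * ((n : K) - 1) * ((n : K) - 2)) * (derivative Φ) ^ 3 ∧
      riccatiDer δ q Ω = (C (3 * (n : K) * a1) + C (3 * (2 - (n : K))) * X) * Ω ∧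
      (3 : Polynomial K) * riccatiDer δ q H * Ω = (2 : Polynomial K) * H * riccatiDer δ q Ω := by
  -- basic facts about δ
  have h1 : δ 1 = 0 := by
    have h := hmul 1 1
    simp only [one_mul, mul_one] at h
    exact (left_eq_add.mp h)
  have hnat : ∀ m : ℕ, δ ((m : K)) = 0 := by
    intro m
    have := rd_dnsmul δ hadd m 1
    rw [mul_one, h1, mul_zero] at this
    exact this
  have hδn : δ ((n : K)) = 0 := hnat n
  have hδn1 : δ ((n : K) - 1) = 0 := by
    rw [rd_dsub δ hadd, hδn, h1, sub_zero]
  have hδ2n2 : δ (2 * ((n : K) - 2)) = 0 := by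
    have h2 : δ (2 : K) = 0 := by
      have := hnat 2; simpa using this
    rw [hmul, rd_dsub δ hadd, hδn, h2]
    ring
  set A : Polynomial K := C ((n : K) * a1) - C (n : K) * X with hA
  have hdA : derivative A = -C (n : K) := by
    rw [hA]; simp
  -- derivative chain
  have h2 : riccatiDer δ q (derivative Φ)
      = -C (n : K) * Φ + (A + 2 * X) * derivative Φ := by
    rw [rd_deriv δ hadd q, hdar, derivative_mul, hdA]
    ring
  have h3 : riccatiDer δ q (derivative (derivative Φ))
      = (2 - 2 * C (n : K)) * derivative Φ + (A + 4 * X) * derivative (derivative Φ) := by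
    rw [rd_deriv δ hadd q, h2, derivative_add, derivative_mul, derivative_mul,
      derivative_add, hdA]
    simp only [derivative_neg, derivative_C, derivative_mul, derivative_X,
      derivative_ofNat, neg_zero, zero_mul, mul_one, zero_add, mul_zero, add_zero]
    ring
  have hDH : riccatiDer δ q H = (2 * A + 4 * X) * H := by
    rw [hH, sq, rd_sub δ hadd q, rd_mul δ hadd hmul q, rd_mul δ hadd hmul q,
      rd_mul δ hadd hmul q, rd_mul δ hadd hmul q, rd_C δ hadd q, rd_C δ hadd q,
      hdar, h2, h3, hδn, hδn1]
    simp only [map_zero, map_sub, map_one]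
    ring
  have hDH' : riccatiDer δ q (derivative H)
      = (4 - 2 * C (n : K)) * H + (2 * A + 6 * X) * derivative H := by
    rw [rd_deriv δ hadd q, hDH, derivative_mul, derivative_add, derivative_mul,
      derivative_mul, hdA]
    simp only [derivative_ofNat, derivative_X, zero_mul, mul_one, zero_add, add_zero]
    ring
  have hDΩ : riccatiDer δ q Ω = (3 * A + 6 * X) * Ω := by
    rw [hΩ, rd_sub δ hadd q, rd_mul δ hadd hmul q, rd_mul δ hadd hmul q,
      rd_mul δ hadd hmul q, rd_mul δ hadd hmul q, rd_C δ hadd q, rd_C δ hadd q,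
      hdar, h2, hDH, hDH', hδn, hδ2n2]
    simp only [map_zero, map_mul, map_sub, map_ofNat]
    ring
  refine ⟨?_, ?_, ?_⟩
  · -- explicit formula for Ω
    rw [hΩ, hH]
    simp only [derivative_sub, derivative_mul, derivative_pow, derivative_C,
      zero_mul, zero_add, add_zero]
    simp only [map_sub, map_mul, map_one, map_pow, map_ofNat, Nat.cast_ofNat]
    push_cast
    ring
  · rw [hDΩ, hA]
    simp only [map_mul, map_sub, map_ofNat]
    ring
  · rw [hDH, hDΩ]
    ring
end

section
/- With Φ, H, Ω as above and Ω₁ := nΦΩ' − 3(n−2)ΩΦ', one has X(Ω₁) = 4(na₁ − nu + 2u)Ω₁, and therefore 2·Ω₁·X(H) = X(Ω₁)·H, so Ω₁/H² is a first integral of X on the fraction field. -/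
open Polynomial

noncomputable def scoef {K : Type*} [Field K] (δ : K → K) (f : Polynomial K) : Polynomial K :=
  f.sum (fun k c => C (δ c) * X ^ k)

section
variable {K : Type*} [Field K] (δ : K → K)

lemma delta_zero (hadd : ∀ a b : K, δ (a + b) = δ a + δ b) : δ 0 = 0 := by
  have h := hadd 0 0
  rw [add_zero] at h
  exact (left_eq_add.mp h)

lemma delta_one (hmul : ∀ a b : K, δ (a * b) = a * δ b + δ a * b) : δ 1 = 0 := by
  have h := hmul 1 1
  simp at h
  exact h

lemma delta_neg (hadd : ∀ a b : K, δ (a + b) = δ a + δ b) (a : K) : δ (-a) = -δ a := by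
  have h := hadd a (-a)
  rw [add_neg_cancel, delta_zero δ hadd] at h
  linear_combination -h

lemma delta_sub (hadd : ∀ a b : K, δ (a + b) = δ a + δ b) (a b : K) :
    δ (a - b) = δ a - δ b := by
  rw [sub_eq_add_neg, hadd, delta_neg δ hadd]; ring

lemma delta_natCast (hadd : ∀ a b : K, δ (a + b) = δ a + δ b)
    (hmul : ∀ a b : K, δ (a * b) = a * δ b + δ a * b) (m : ℕ) : δ (m : K) = 0 := by
  induction m with
  | zero => simpa using delta_zero δ hadd
  | succ k ih => push_cast; rw [hadd, ih, delta_one δ hmul, add_zero]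

lemma scoef_monomial (hadd : ∀ a b : K, δ (a + b) = δ a + δ b) (k : ℕ) (c : K) :
    scoef δ (monomial k c) = C (δ c) * X ^ k := by
  unfold scoef
  rw [Polynomial.sum_monomial_index]
  rw [delta_zero δ hadd]; simp

lemma scoef_add (hadd : ∀ a b : K, δ (a + b) = δ a + δ b) (f g : Polynomial K) :
    scoef δ (f + g) = scoef δ f + scoef δ g := by
  unfold scoef
  rw [Polynomial.sum_add_index]
  · intro i; rw [delta_zero δ hadd]; simp
  · intro i b₁ b₂; rw [hadd]; simp [add_mul]

lemma scoef_mul (hadd : ∀ a b : K, δ (a + b) = δ a + δ b)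
    (hmul : ∀ a b : K, δ (a * b) = a * δ b + δ a * b) (f g : Polynomial K) :
    scoef δ (f * g) = f * scoef δ g + scoef δ f * g := by
  induction f using Polynomial.induction_on' with
  | add p r hp hr => simp only [add_mul, scoef_add δ hadd, hp, hr]; ring
  | monomial m a =>
    induction g using Polynomial.induction_on' with
    | add p r hp hr => simp only [mul_add, scoef_add δ hadd, hp, hr]; ring
    | monomial k b =>
      rw [monomial_mul_monomial, scoef_monomial δ hadd, scoef_monomial δ hadd,
        scoef_monomial δ hadd, hmul, ← C_mul_X_pow_eq_monomial, ← C_mul_X_pow_eq_monomial,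
        map_add, map_mul, map_mul, pow_add]
      ring

lemma scoef_C (hadd : ∀ a b : K, δ (a + b) = δ a + δ b) (a : K) :
    scoef δ (C a) = C (δ a) := by
  rw [← monomial_zero_left, scoef_monomial δ hadd]; simp

lemma scoef_derivative (hadd : ∀ a b : K, δ (a + b) = δ a + δ b)
    (hmul : ∀ a b : K, δ (a * b) = a * δ b + δ a * b) (f : Polynomial K) :
    scoef δ (derivative f) = derivative (scoef δ f) := by
  induction f using Polynomial.induction_on' with
  | add p r hp hr => simp only [derivative_add, scoef_add δ hadd, hp, hr]
  | monomial m a =>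
    rw [derivative_monomial, scoef_monomial δ hadd, scoef_monomial δ hadd,
      derivative_C_mul, derivative_X_pow, hmul, delta_natCast δ hadd hmul, map_add, map_mul]
    simp
    ring
end

section
variable {K : Type*} [Field K] (δ : K → K) (q : K)

lemma riccatiDer_eq (f : Polynomial K) :
    riccatiDer δ q f = scoef δ f + (C q - X ^ 2) * derivative f := rfl

lemma riccatiDer_C (hadd : ∀ a b : K, δ (a + b) = δ a + δ b) (a : K) :
    riccatiDer δ q (C a) = C (δ a) := by
  rw [riccatiDer_eq, scoef_C δ hadd]; simp

lemma riccatiDer_add (hadd : ∀ a b : K, δ (a + b) = δ a + δ b) (f g : Polynomial K) :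
    riccatiDer δ q (f + g) = riccatiDer δ q f + riccatiDer δ q g := by
  simp only [riccatiDer_eq, scoef_add δ hadd, derivative_add]; ring

lemma riccatiDer_mul (hadd : ∀ a b : K, δ (a + b) = δ a + δ b)
    (hmul : ∀ a b : K, δ (a * b) = a * δ b + δ a * b) (f g : Polynomial K) :
    riccatiDer δ q (f * g) = f * riccatiDer δ q g + riccatiDer δ q f * g := by
  simp only [riccatiDer_eq, scoef_mul δ hadd hmul, derivative_mul]; ring

lemma riccatiDer_neg (hadd : ∀ a b : K, δ (a + b) = δ a + δ b) (f : Polynomial K) :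
    riccatiDer δ q (-f) = -riccatiDer δ q f := by
  have h : scoef δ (-f) = -scoef δ f := by
    have h2 : (-f) + f = 0 := by ring
    have h3 := scoef_add δ hadd (-f) f
    rw [h2] at h3
    have h0 : scoef δ (0 : Polynomial K) = 0 := by
      simp [scoef]
    rw [h0] at h3
    linear_combination -h3
  simp only [riccatiDer_eq, h, derivative_neg]; ring

lemma riccatiDer_sub (hadd : ∀ a b : K, δ (a + b) = δ a + δ b) (f g : Polynomial K) :
    riccatiDer δ q (f - g) = riccatiDer δ q f - riccatiDer δ q g := by
  rw [sub_eq_add_neg, riccatiDer_add δ q hadd, riccatiDer_neg δ q hadd, sub_eq_add_neg]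

lemma riccatiDer_derivative (hadd : ∀ a b : K, δ (a + b) = δ a + δ b)
    (hmul : ∀ a b : K, δ (a * b) = a * δ b + δ a * b) (f : Polynomial K) :
    riccatiDer δ q (derivative f)
      = derivative (riccatiDer δ q f) + 2 * X * derivative f := by
  simp only [riccatiDer_eq, scoef_derivative δ hadd hmul, derivative_add, derivative_mul,
    derivative_sub, derivative_C, derivative_X_pow, Nat.cast_ofNat, map_ofNat]
  ring
end

/-- With `Φ`, `H`, `Ω` as before and `Ω₁ = nΦΩ' − 3(n−2)ΩΦ'`, one has
`X(Ω₁) = 4(na₁ − nu + 2u)Ω₁`, hence `2Ω₁·X(H) = X(Ω₁)·H` (so `Ω₁/H²` is a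
first integral of `X`). -/
theorem omega1_is_darboux
    {K : Type*} [Field K] [CharZero K]
    (δ : K → K)
    (hadd : ∀ a b : K, δ (a + b) = δ a + δ b)
    (hmul : ∀ a b : K, δ (a * b) = a * δ b + δ a * b)
    (q : K) (n : ℕ) (a1 : K)
    (Φ : Polynomial K) (hmonic : Φ.Monic) (hdeg : Φ.natDegree = n)
    (hdar : riccatiDer δ q Φ = (C ((n : K) * a1) - C (n : K) * X) * Φ)
    (H : Polynomial K)
    (hH : H = C (n : K) * Φ * derivative (derivative Φ)
      - C ((n : K) - 1) * (derivative Φ) ^ 2)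
    (Ω : Polynomial K)
    (hΩ : Ω = C (n : K) * Φ * derivative H - C (2 * ((n : K) - 2)) * H * derivative Φ)
    (Ω₁ : Polynomial K)
    (hΩ₁ : Ω₁ = C (n : K) * Φ * derivative Ω - C (3 * ((n : K) - 2)) * Ω * derivative Φ) :
    riccatiDer δ q Ω₁ = (C (4 * (n : K) * a1) + C (4 * (2 - (n : K))) * X) * Ω₁ ∧
      (2 : Polynomial K) * Ω₁ * riccatiDer δ q H = riccatiDer δ q Ω₁ * H := by
  have hδn : δ (n : K) = 0 := delta_natCast δ hadd hmul n
  have hδ1 : δ (1 : K) = 0 := delta_one δ hmul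
  have hδ2 : δ (2 : K) = 0 := by
    have h := delta_natCast δ hadd hmul 2; exact_mod_cast h
  have hδn1 : δ ((n : K) - 1) = 0 := by rw [delta_sub δ hadd, hδn, hδ1]; ring
  have hδn2 : δ ((n : K) - 2) = 0 := by rw [delta_sub δ hadd, hδn, hδ2]; ring
  have hδ2n2 : δ (2 * ((n : K) - 2)) = 0 := by rw [hmul, hδn2, hδ2]; ring
  have hδ3n2 : δ (3 * ((n : K) - 2)) = 0 := by
    have hδ3 : δ (3 : K) = 0 := by
      have h := delta_natCast δ hadd hmul 3; exact_mod_cast h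
    rw [hmul, hδn2, hδ3]; ring
  have Dmul := riccatiDer_mul δ q hadd hmul
  have DC := riccatiDer_C δ q hadd
  have Dsub := riccatiDer_sub δ q hadd
  have Dder := riccatiDer_derivative δ q hadd hmul
  have hDΦ' : riccatiDer δ q (derivative Φ)
      = -(C (n : K)) * Φ + (C (n : K) * C a1 + (2 - C (n : K)) * X) * derivative Φ := by
    rw [Dder, hdar]
    simp only [derivative_mul, derivative_sub, derivative_C, derivative_X, map_mul]
    ring
  have hDΦ'' : riccatiDer δ q (derivative (derivative Φ))
      = (2 - 2 * C (n : K)) * derivative Φ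
        + (C (n : K) * C a1 + (4 - C (n : K)) * X) * derivative (derivative Φ) := by
    rw [Dder, hDΦ']
    simp only [derivative_add, derivative_mul, derivative_sub, derivative_neg, derivative_C,
      derivative_X, derivative_ofNat]
    ring
  have hDH : riccatiDer δ q H
      = (2 * C (n : K) * C a1 + (4 - 2 * C (n : K)) * X) * H := by
    rw [hH]
    simp only [pow_two, Dsub, Dmul, DC, hdar, hDΦ', hDΦ'', hδn, hδn1, C_0]
    simp only [map_mul, map_sub, map_one]
    ring
  have hDH' : riccatiDer δ q (derivative H)
      = (4 - 2 * C (n : K)) * H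
        + (2 * C (n : K) * C a1 + (6 - 2 * C (n : K)) * X) * derivative H := by
    rw [Dder, hDH]
    simp only [derivative_add, derivative_mul, derivative_sub, derivative_C, derivative_X,
      derivative_ofNat]
    ring
  have hDΩ : riccatiDer δ q Ω
      = (3 * C (n : K) * C a1 + (6 - 3 * C (n : K)) * X) * Ω := by
    rw [hΩ]
    simp only [Dsub, Dmul, DC, hdar, hDH', hDH, hDΦ', hδn, hδ2n2, C_0]
    simp only [map_mul, map_sub, map_ofNat]
    ring
  have hDΩ' : riccatiDer δ q (derivative Ω)
      = (6 - 3 * C (n : K)) * Ω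
        + (3 * C (n : K) * C a1 + (8 - 3 * C (n : K)) * X) * derivative Ω := by
    rw [Dder, hDΩ]
    simp only [derivative_add, derivative_mul, derivative_sub, derivative_C, derivative_X,
      derivative_ofNat]
    ring
  have hfirst : riccatiDer δ q Ω₁
      = (C (4 * (n : K) * a1) + C (4 * (2 - (n : K))) * X) * Ω₁ := by
    rw [hΩ₁]
    simp only [Dsub, Dmul, DC, hdar, hDΩ', hDΩ, hDΦ', hδn, hδ3n2, C_0]
    simp only [map_mul, map_sub, map_ofNat]
    ring
  refine ⟨hfirst, ?_⟩
  rw [hfirst, hDH]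
  simp only [map_mul, map_sub, map_ofNat]
  ring
end
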